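/- Let x, y ∈ [0,1] and let z ∈ ℝ satisfy x·y ≤ z ≤ min(x, y). Then z is the value of a Frank t-norm T_λ at (x, y) for some parameter λ ∈ [0,1]: either z = min(x, y), or z = x·y, or there exists λ ∈ (0, 1) such that z = log(1 + (λˣ − 1)(λʸ − 1)/(λ − 1)) / log λ. (Representation of the set of coherent prevision assessments on {A|H, A|K, (A|H)∧(A|K)} by Frank t-norms with λ ∈ [0,1].) -/

import Mathlib

/-!
For `x ≤ y` in `(0, 1]`, the map `λ ↦ T_λ(x, y)` is continuous on `(0, 1)`. As `λ → 0⁺` it tends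
to `x = min x y`, squeezed between `x` and `x + (log 2 - log (1 - λ)) / log λ` because
`λ ^ x ≤ λ ^ T_λ(x, y) ≤ 2 λ ^ x / (1 - λ)`. As `λ → 1⁻` it tends to `x * y`, since `T_λ(x, y)` is a
product of difference quotients at `1` of `log`, `t ↦ t ^ x` and `t ↦ t ^ y`. The intermediate value
theorem then reaches every `z` strictly between `x * y` and `min x y`.
-/

open Filter Set Real Topology

noncomputable def frankArg (l x y : ℝ) : ℝ := 1 + (l ^ x - 1) * (l ^ y - 1) / (l - 1)

noncomputable def frankTNorm (l x y : ℝ) : ℝ := log (frankArg l x y) / log l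

lemma frankTNorm_comm (l x y : ℝ) : frankTNorm l x y = frankTNorm l y x := by
  simp only [frankTNorm, frankArg, mul_comm]

section

variable {l x y z : ℝ}

lemma frankArg_eq (hl : l ≠ 1) :
    frankArg l x y = (l ^ x + l ^ y - l - l ^ x * l ^ y) / (1 - l) := by
  have : l - 1 ≠ 0 := sub_ne_zero.2 hl
  have : 1 - l ≠ 0 := sub_ne_zero.2 hl.symm
  rw [frankArg, eq_div_iff this]
  field_simp
  ring

lemma rpow_le_frankArg (hl₀ : 0 < l) (hl₁ : l < 1) (hx : 0 ≤ x) (hy : y ≤ 1) :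
    l ^ x ≤ frankArg l x y := by
  have hlx : l ^ x ≤ 1 := rpow_le_one hl₀.le hl₁.le hx
  have hly : l ≤ l ^ y := by
    simpa using rpow_le_rpow_of_exponent_ge hl₀ hl₁.le hy
  rw [frankArg_eq hl₁.ne, le_div_iff₀ (by linarith)]
  -- the difference is `(1 - l ^ x) * (l ^ y - l)`
  nlinarith [mul_nonneg (sub_nonneg.2 hlx) (sub_nonneg.2 hly)]

lemma frankArg_pos (hl₀ : 0 < l) (hl₁ : l < 1) (hx : 0 ≤ x) (hy : y ≤ 1) :
    0 < frankArg l x y :=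
  (rpow_pos_of_pos hl₀ x).trans_le (rpow_le_frankArg hl₀ hl₁ hx hy)

lemma frankArg_le (hl₀ : 0 < l) (hl₁ : l < 1) (hxy : x ≤ y) :
    frankArg l x y ≤ 2 * l ^ x / (1 - l) := by
  have hly : l ^ y ≤ l ^ x := rpow_le_rpow_of_exponent_ge hl₀ hl₁.le hxy
  have hprod := mul_pos (rpow_pos_of_pos hl₀ x) (rpow_pos_of_pos hl₀ y)
  rw [frankArg_eq hl₁.ne]
  gcongr
  linarith

lemma frankTNorm_le (hl₀ : 0 < l) (hl₁ : l < 1) (hx : 0 ≤ x) (hy : y ≤ 1) :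
    frankTNorm l x y ≤ x := by
  have h := log_le_log (rpow_pos_of_pos hl₀ x) (rpow_le_frankArg hl₀ hl₁ hx hy)
  rw [log_rpow hl₀] at h
  rwa [frankTNorm, div_le_iff_of_neg (log_neg hl₀ hl₁)]

lemma le_frankTNorm (hl₀ : 0 < l) (hl₁ : l < 1) (hx : 0 ≤ x) (hxy : x ≤ y) (hy : y ≤ 1) :
    x + (log 2 - log (1 - l)) / log l ≤ frankTNorm l x y := by
  have hlog : log l < 0 := log_neg hl₀ hl₁
  have hpow : 0 < l ^ x := rpow_pos_of_pos hl₀ x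
  have h := log_le_log (frankArg_pos hl₀ hl₁ hx hy) (frankArg_le hl₀ hl₁ hxy)
  rw [log_div (by positivity) (by linarith), log_mul two_ne_zero hpow.ne', log_rpow hl₀] at h
  rw [frankTNorm, le_div_iff_of_neg hlog, add_mul, div_mul_cancel₀ _ hlog.ne]
  linarith

lemma continuousOn_frankTNorm (hx : 0 ≤ x) (hy : y ≤ 1) :
    ContinuousOn (fun l => frankTNorm l x y) (Ioo 0 1) := by
  intro l ⟨hl₀, hl₁⟩
  have hArg : ContinuousAt (frankArg · x y) l :=
    continuousAt_const.add <|
      (((continuousAt_rpow_const l x (.inl hl₀.ne')).sub continuousAt_const).mul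
        ((continuousAt_rpow_const l y (.inl hl₀.ne')).sub continuousAt_const)).div
      (continuousAt_id.sub continuousAt_const) (by linarith)
  exact ((hArg.log (frankArg_pos hl₀ hl₁ hx hy).ne').div (continuousAt_log hl₀.ne')
    (log_neg hl₀ hl₁).ne).continuousWithinAt

lemma tendsto_frankTNorm_zero (hx : 0 ≤ x) (hxy : x ≤ y) (hy : y ≤ 1) :
    Tendsto (fun l => frankTNorm l x y) (𝓝[>] 0) (𝓝 x) := by
  have hnum : ContinuousAt (fun l : ℝ => log 2 - log (1 - l)) 0 :=
    continuousAt_const.sub ((continuousAt_const.sub continuousAt_id).log (by norm_num))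
  have herr : Tendsto (fun l => (log 2 - log (1 - l)) / log l) (𝓝[>] 0) (𝓝 0) :=
    (hnum.tendsto.mono_left nhdsWithin_le_nhds).div_atBot
      (tendsto_log_nhdsNE_zero.mono_left (nhdsGT_le_nhdsNE 0))
  refine tendsto_of_tendsto_of_tendsto_of_le_of_le' (by simpa using herr.const_add x)
    tendsto_const_nhds ?_ ?_
  all_goals filter_upwards [Ioo_mem_nhdsGT one_pos] with l ⟨hl₀, hl₁⟩
  exacts [le_frankTNorm hl₀ hl₁ hx hxy hy, frankTNorm_le hl₀ hl₁ hx hy]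

lemma tendsto_frankTNorm_one (hx : x ≠ 0) (hy : y ≠ 0) :
    Tendsto (fun l => frankTNorm l x y) (𝓝[<] 1) (𝓝 (x * y)) := by
  have slope_rpow (p : ℝ) : Tendsto (fun l : ℝ => (l ^ p - 1) / (l - 1)) (𝓝[≠] 1) (𝓝 p) := by
    simpa [slope_fun_def_field] using
      (hasDerivAt_rpow_const (x := 1) (p := p) (.inl one_ne_zero)).tendsto_slope
  have slope_log : Tendsto (fun t : ℝ => log t / (t - 1)) (𝓝[≠] 1) (𝓝 1) := by
    simpa [slope_fun_def_field] using (hasDerivAt_log one_ne_zero).tendsto_slope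
  have rpow_ne_one (p : ℝ) (hp : p ≠ 0) : ∀ᶠ l in 𝓝[<] (1 : ℝ), l ^ p ≠ 1 := by
    filter_upwards [Ioo_mem_nhdsLT one_pos] with l ⟨hl₀, hl₁⟩
    simpa using (rpow_right_inj hl₀ hl₁.ne (z := 0)).not.2 hp
  have hArg : Tendsto (frankArg · x y) (𝓝[<] 1) (𝓝[≠] 1) := by
    refine tendsto_nhdsWithin_iff.2 ⟨?_, ?_⟩
    · have hy₁ : Tendsto (fun l : ℝ => l ^ y - 1) (𝓝[<] 1) (𝓝 0) := by
        simpa using ((continuousAt_rpow_const 1 y (.inl one_ne_zero)).tendsto.sub_const 1).mono_left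
          nhdsWithin_le_nhds
      simpa [frankArg, div_mul_eq_mul_div] using
        (((slope_rpow x).mono_left (nhdsLT_le_nhdsNE 1)).mul hy₁).const_add 1
    · filter_upwards [rpow_ne_one x hx, rpow_ne_one y hy, Ioo_mem_nhdsLT one_pos]
        with l hlx hly hl
      simp [frankArg, sub_eq_zero, hlx, hly, hl.2.ne]
  -- `T_λ = (log w / (w - 1)) * ((λ ^ x - 1) / (λ - 1) * ((λ ^ y - 1) / (λ - 1))) / (log λ / (λ - 1))`
  -- with `w = frankArg λ x y`
  have hlim := ((slope_log.comp hArg).mul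
    (((slope_rpow x).mul (slope_rpow y)).mono_left (nhdsLT_le_nhdsNE 1))).div
      (slope_log.mono_left (nhdsLT_le_nhdsNE 1)) one_ne_zero
  rw [one_mul, div_one] at hlim
  refine hlim.congr' ?_
  filter_upwards [hArg.eventually self_mem_nhdsWithin, Ioo_mem_nhdsLT one_pos] with l hw ⟨hl₀, hl₁⟩
  have hw₁ : frankArg l x y - 1 = (l ^ x - 1) * (l ^ y - 1) / (l - 1) := by
    rw [frankArg, add_sub_cancel_left]
  have : l - 1 ≠ 0 := by linarith
  have : log l ≠ 0 := (log_neg hl₀ hl₁).ne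
  obtain ⟨hlx, hly⟩ : l ^ x - 1 ≠ 0 ∧ l ^ y - 1 ≠ 0 :=
    mul_ne_zero_iff.1 (div_ne_zero_iff.1 (hw₁ ▸ sub_ne_zero.2 hw)).1
  simp only [Pi.div_apply, Function.comp_apply, frankTNorm, hw₁]
  field_simp

lemma exists_frankTNorm_eq_of_le (hxy : x ≤ y) (hy : y ≤ 1)
    (hz : z ∈ Ioo (x * y) x) : ∃ l ∈ Ioo 0 1, frankTNorm l x y = z := by
  have hx : 0 < x := by nlinarith [hz.1.trans hz.2]
  exact isPreconnected_Ioo.intermediate_value_Ioo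
    (le_principal_iff.2 (Ioo_mem_nhdsLT one_pos))
    (le_principal_iff.2 (Ioo_mem_nhdsGT one_pos))
    (continuousOn_frankTNorm hx.le hy)
    (tendsto_frankTNorm_one hx.ne' (hx.trans_le hxy).ne')
    (tendsto_frankTNorm_zero hx.le hxy hy) hz

lemma exists_frankTNorm_eq (hx : x ≤ 1) (hy : y ≤ 1)
    (hz : z ∈ Ioo (x * y) (min x y)) : ∃ l ∈ Ioo 0 1, frankTNorm l x y = z := by
  wlog hxy : x ≤ y generalizing x y
  · obtain ⟨l, hl, hz⟩ := this hy hx (by rwa [mul_comm, min_comm]) (le_of_not_ge hxy)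
    exact ⟨l, hl, frankTNorm_comm l x y ▸ hz⟩
  rw [min_eq_left hxy] at hz
  exact exists_frankTNorm_eq_of_le hxy hy hz

end

/-- Any `z` with `x·y ≤ z ≤ min(x,y)` is the value of a Frank t-norm `T_λ` at
    `(x,y)` for some `λ ∈ [0,1]` (representation of the coherent assessments
    on `{A|H, A|K, (A|H)∧(A|K)}` by Frank t-norms with `λ ∈ [0,1]`). -/
theorem frank_tnorm_representation_unit_interval (x y z : ℝ)
    (hx : x ∈ Set.Icc (0 : ℝ) 1) (hy : y ∈ Set.Icc (0 : ℝ) 1)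
    (h1 : x * y ≤ z) (h2 : z ≤ min x y) :
    z = min x y ∨ z = x * y ∨
      ∃ l ∈ Set.Ioo (0 : ℝ) 1,
        z = Real.log (1 + (l ^ x - 1) * (l ^ y - 1) / (l - 1)) / Real.log l := by
  rcases h2.eq_or_lt with h2 | h2
  · exact .inl h2
  rcases h1.eq_or_lt with h1 | h1
  · exact .inr (.inl h1.symm)
  obtain ⟨l, hl, hz⟩ := exists_frankTNorm_eq hx.2 hy.2 ⟨h1, h2⟩
  exact .inr (.inr ⟨l, hl, hz.symm⟩)
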